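/- arXiv:1309.7066 — 6 statements merged into one kernel-verified Lean document; each statement's English description precedes it below -/
import Mathlib

section
/- Let G be a finite simple graph, s ≠ t vertices, and g a flow from s to t of value x with x ≥ 0. Then the volume of g is at least x · dist(s,t), i.e., ∑_{(u,v)∈V×V} g(u,v) ≥ x · dist(s,t). (This is the paper's claim that a flow of throughput x between endpoints at shortest-path distance d consumes at least x·d units of capacity.) -/
open Finset

/-- A flow from `s` to `t` of value `x` on the simple graph `G`:
nonnegative, supported on adjacent pairs, conserved at internal vertices,
with net outflow `x` at `s`. -/
def IsFlow {V : Type*} [Fintype V] (G : SimpleGraph V) (s t : V) (x : ℝ)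
    (g : V → V → ℝ) : Prop :=
  (∀ u v, 0 ≤ g u v) ∧
  (∀ u v, ¬ G.Adj u v → g u v = 0) ∧
  (∀ w, w ≠ s → w ≠ t → (∑ u, g u w) = (∑ v, g w v)) ∧
  ((∑ v, g s v) - (∑ u, g u s) = x)

/-!
Take the potential `φ v = dist(s, v)`. It changes by at most `1` along an edge, so the work
`∑ g(u,v) (φ v - φ u)` done by the flow is at most its volume. Summation by parts rewrites this
work as `∑_w (inflow w - outflow w) φ w`, and by conservation only `s` and `t` contribute,
giving `x (φ t - φ s) = x · dist(s, t)`.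
-/

section Potential

variable {V : Type*} [Fintype V]

theorem sum_sum_mul_sub_eq_sum_netInflow_mul (g : V → V → ℝ) (φ : V → ℝ) :
    ∑ u, ∑ v, g u v * (φ v - φ u) = ∑ w, ((∑ u, g u w) - ∑ v, g w v) * φ w := by
  simp only [mul_sub, sub_mul, Finset.sum_sub_distrib, Finset.sum_mul]
  rw [Finset.sum_comm (f := fun u v => g u v * φ v)]

theorem sum_sum_mul_sub_le_sum_sum_of_adj (G : SimpleGraph V) {g : V → V → ℝ} {φ : V → ℝ}
    (hnn : ∀ u v, 0 ≤ g u v) (hsupp : ∀ u v, ¬ G.Adj u v → g u v = 0)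
    (hφ : ∀ u v, G.Adj u v → φ v ≤ φ u + 1) :
    ∑ u, ∑ v, g u v * (φ v - φ u) ≤ ∑ u, ∑ v, g u v := by
  refine Finset.sum_le_sum fun u _ => Finset.sum_le_sum fun v _ => ?_
  by_cases hadj : G.Adj u v
  · exact mul_le_of_le_one_right (hnn u v) (by linarith [hφ u v hadj])
  · simp [hsupp u v hadj]

end Potential

theorem SimpleGraph.Adj.dist_le_dist_add_one {V : Type*} {G : SimpleGraph V} {u v : V}
    (hadj : G.Adj u v) (s : V) : G.dist s v ≤ G.dist s u + 1 := by
  simpa [SimpleGraph.dist_eq_one_iff_adj.mpr hadj] using hadj.reachable.dist_triangle_right s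

theorem IsFlow.sum_netInflow_mul {V : Type*} [Fintype V] {G : SimpleGraph V}
    {s t : V} {x : ℝ} {g : V → V → ℝ} (hg : IsFlow G s t x g) (hst : s ≠ t) (φ : V → ℝ) :
    ∑ w, ((∑ u, g u w) - ∑ v, g w v) * φ w = x * (φ t - φ s) := by
  obtain ⟨-, -, hcons, hval⟩ := hg
  have hinternal : ∀ w, w ≠ s ∧ w ≠ t → (∑ u, g u w) - ∑ v, g w v = 0 :=
    fun w hw => sub_eq_zero.mpr (hcons w hw.1 hw.2)
  have htotal : ∑ w, ((∑ u, g u w) - ∑ v, g w v) = 0 := by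
    rw [Finset.sum_sub_distrib, Finset.sum_comm, sub_self]
  have ht : (∑ u, g u t) - ∑ v, g t v = x := by
    rw [Fintype.sum_eq_add s t hst hinternal] at htotal
    linarith
  rw [Fintype.sum_eq_add s t hst fun w hw => by rw [hinternal w hw, zero_mul], ht,
    show (∑ u, g u s) - ∑ v, g s v = -x by linarith]
  ring

theorem stmt_1_general {V : Type*} [Fintype V] (G : SimpleGraph V)
    (s t : V) (hst : s ≠ t) (x : ℝ) (g : V → V → ℝ)
    (hg : IsFlow G s t x g) :
    x * (G.dist s t : ℝ) ≤ ∑ u, ∑ v, g u v := by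
  let φ : V → ℝ := fun v => G.dist s v
  have hφ : ∀ u v, G.Adj u v → φ v ≤ φ u + 1 := fun u v hadj => by
    simp only [φ]
    exact_mod_cast hadj.dist_le_dist_add_one s
  calc x * (G.dist s t : ℝ) = x * (φ t - φ s) := by simp [φ]
    _ = ∑ u, ∑ v, g u v * (φ v - φ u) := by
      rw [sum_sum_mul_sub_eq_sum_netInflow_mul, hg.sum_netInflow_mul hst]
    _ ≤ ∑ u, ∑ v, g u v := sum_sum_mul_sub_le_sum_sum_of_adj G hg.1 hg.2.1 hφ

/-- A flow of value `x ≥ 0` from `s` to `t` has total volume at least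
`x` times the shortest-path distance from `s` to `t`. -/
theorem stmt_1 {V : Type*} [Fintype V] [DecidableEq V] (G : SimpleGraph V)
    (s t : V) (hst : s ≠ t) (x : ℝ) (g : V → V → ℝ)
    (hg : IsFlow G s t x g) (hx : 0 ≤ x) :
    x * (G.dist s t : ℝ) ≤ ∑ u, ∑ v, g u v :=
  stmt_1_general G s t hst x g hg
end

section
/- (Theorem 1 of the paper.) Let G be an r-regular simple graph on N vertices, let (s_i, t_i)_{i∈I} be a finite family of commodities with s_i ≠ t_i, and let (g_i)_{i∈I} be a concurrent multicommodity flow respecting unit capacities, in which every commodity's value satisfies x_i ≥ T for some real T ≥ 0. Then T · ∑_{i∈I} dist(s_i, t_i) ≤ N · r. Equivalently, when ∑_{i∈I} dist(s_i,t_i) > 0, the minimum-flow throughput T is at most N r divided by the sum of the commodity endpoint distances (the paper writes this as T ≤ Nr/(⟨D⟩ f) with f commodities of average endpoint distance ⟨D⟩). -/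
/-!
Every unit of flow sent along an edge raises the distance from `s` by at most one, while the
flow of value `x` from `s` to `t` must climb `dist(s, t)` in total; so commodity `i` uses at least
`xᵢ · dist(sᵢ, tᵢ)` units of capacity. Summing over the commodities and comparing with the total
capacity `N r` of the edges gives the bound. -/

open Finset

section

variable {V : Type*} [Fintype V]

def netInflow (g : V → V → ℝ) (w : V) : ℝ :=
  ∑ u, g u w - ∑ v, g w v

theorem sum_sum_mul_sub_eq_sum_mul_netInflow (g : V → V → ℝ) (φ : V → ℝ) :
    ∑ u, ∑ v, g u v * (φ v - φ u) = ∑ w, φ w * netInflow g w := by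
  simp only [netInflow, mul_sub, mul_sum, sum_sub_distrib]
  rw [sum_comm (f := fun u v => g u v * φ v)]
  simp only [mul_comm]

theorem sum_netInflow (g : V → V → ℝ) : ∑ w, netInflow g w = 0 := by
  simp only [netInflow, sum_sub_distrib]
  rw [sum_comm, sub_self]

namespace IsFlow

variable {G : SimpleGraph V} {s t : V} {x : ℝ} {g : V → V → ℝ}

theorem nonneg (hg : IsFlow G s t x g) (u v : V) : 0 ≤ g u v :=
  hg.1 u v

theorem eq_zero_of_not_adj (hg : IsFlow G s t x g) {u v : V} (huv : ¬ G.Adj u v) : g u v = 0 :=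
  hg.2.1 u v huv

theorem netInflow_eq [DecidableEq V] (hst : s ≠ t) (hg : IsFlow G s t x g) (w : V) :
    netInflow g w = (if w = t then x else 0) - (if w = s then x else 0) := by
  obtain ⟨-, -, hcons, hval⟩ := hg
  set e : V → ℝ := fun w => (if w = t then x else 0) - (if w = s then x else 0)
  have off_target : ∀ w ≠ t, netInflow g w = e w := by
    intro w hwt
    by_cases hws : w = s
    · subst hws
      simp only [netInflow, e, if_neg hwt, if_pos]
      linarith
    · simp [netInflow, e, hwt, hws, hcons w hws hwt]
  rcases eq_or_ne w t with rfl | hwt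
  · -- both `netInflow g` and `e` sum to zero, and they agree away from `t`
    have total : ∑ w, (netInflow g w - e w) = 0 := by
      simp [e, sum_sub_distrib, sum_netInflow]
    rw [sum_eq_single w (fun b _ hb => sub_eq_zero.2 (off_target b hb)) (by simp)] at total
    exact sub_eq_zero.1 total
  · exact off_target w hwt

theorem sum_sum_mul_sub_eq (hst : s ≠ t) (hg : IsFlow G s t x g) (φ : V → ℝ) :
    ∑ u, ∑ v, g u v * (φ v - φ u) = x * (φ t - φ s) := by
  classical
  rw [sum_sum_mul_sub_eq_sum_mul_netInflow]
  simp only [hg.netInflow_eq hst, mul_sub, mul_ite, mul_zero, sum_sub_distrib, sum_ite_eq',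
    mem_univ, if_true]
  ring

theorem mul_dist_le_sum_sum (hg : IsFlow G s t x g) :
    x * G.dist s t ≤ ∑ u, ∑ v, g u v := by
  rcases eq_or_ne s t with rfl | hst
  · simpa using sum_nonneg fun u _ => sum_nonneg fun v _ => hg.nonneg u v
  have climb : ∀ u v, g u v * ((G.dist s v : ℝ) - G.dist s u) ≤ g u v := by
    intro u v
    by_cases hadj : G.Adj u v
    · have := hadj.diff_dist_adj (u := s)
      have : (G.dist s v : ℝ) ≤ G.dist s u + 1 := by exact_mod_cast (by omega)
      nlinarith [hg.nonneg u v]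
    · simp [hg.eq_zero_of_not_adj hadj]
  calc x * G.dist s t = ∑ u, ∑ v, g u v * ((G.dist s v : ℝ) - G.dist s u) := by
        simp [hg.sum_sum_mul_sub_eq hst]
    _ ≤ ∑ u, ∑ v, g u v := by gcongr with u _ v _; exact climb u v

end IsFlow

theorem SimpleGraph.sum_sum_le_sum_degree (G : SimpleGraph V) [DecidableRel G.Adj]
    {h : V → V → ℝ} (hsupp : ∀ u v, ¬ G.Adj u v → h u v = 0) (hle : ∀ u v, h u v ≤ 1) :
    ∑ u, ∑ v, h u v ≤ ∑ u, (G.degree u : ℝ) := by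
  gcongr with u _
  rw [← sum_subset (subset_univ (G.neighborFinset u)) fun v _ hv => hsupp u v (by simpa using hv)]
  exact (sum_le_card_nsmul _ _ 1 fun v _ => hle u v).trans (by simp)

end

theorem stmt_2_general {V I : Type*} [Fintype V] [Fintype I]
    (G : SimpleGraph V) [DecidableRel G.Adj] (N r : ℕ)
    (hN : Fintype.card V = N) (hreg : G.IsRegularOfDegree r)
    (s t : I → V) (x : I → ℝ)
    (g : I → V → V → ℝ)
    (hflow : ∀ i, IsFlow G (s i) (t i) (x i) (g i))
    (hcap : ∀ u v, (∑ i, g i u v) ≤ 1)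
    (T : ℝ) (hTx : ∀ i, T ≤ x i) :
    T * ∑ i, (G.dist (s i) (t i) : ℝ) ≤ (N : ℝ) * (r : ℝ) := by
  have hsupp : ∀ u v, ¬ G.Adj u v → ∑ i, g i u v = 0 := fun u v huv =>
    sum_eq_zero fun i _ => (hflow i).eq_zero_of_not_adj huv
  calc T * ∑ i, (G.dist (s i) (t i) : ℝ) ≤ ∑ i, x i * G.dist (s i) (t i) := by
        rw [mul_sum]; gcongr with i; exact hTx i
    _ ≤ ∑ i, ∑ u, ∑ v, g i u v := by gcongr with i; exact (hflow i).mul_dist_le_sum_sum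
    _ = ∑ u, ∑ v, ∑ i, g i u v := by simp only [sum_comm (γ := I)]
    _ ≤ ∑ u, (G.degree u : ℝ) := G.sum_sum_le_sum_degree hsupp hcap
    _ = N * r := by simp [hreg _, hN]

/-- Theorem 1 of the paper: for an `r`-regular graph on `N` vertices and a
concurrent multicommodity flow respecting unit capacities in which every
commodity's value is at least `T ≥ 0`, we have
`T · ∑ᵢ dist(sᵢ,tᵢ) ≤ N·r`. -/
theorem stmt_2 {V I : Type*} [Fintype V] [DecidableEq V] [Fintype I]
    (G : SimpleGraph V) [DecidableRel G.Adj] (N r : ℕ)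
    (hN : Fintype.card V = N) (hreg : G.IsRegularOfDegree r)
    (s t : I → V) (hst : ∀ i, s i ≠ t i) (x : I → ℝ)
    (g : I → V → V → ℝ)
    (hflow : ∀ i, IsFlow G (s i) (t i) (x i) (g i))
    (hcap : ∀ u v, (∑ i, g i u v) ≤ 1)
    (T : ℝ) (hT : 0 ≤ T) (hTx : ∀ i, T ≤ x i) :
    T * ∑ i, (G.dist (s i) (t i) : ℝ) ≤ (N : ℝ) * (r : ℝ) :=
  stmt_2_general G N r hN hreg s t x g hflow hcap T hTx
end

section
/- Let G be a connected simple graph on N vertices in which every vertex has degree at most r (r ≥ 2), and let u be a vertex. Then for every integer k ≥ 1, ∑_{v∈V} dist(u,v) ≥ ∑_{j=1}^{k−1} j·r(r−1)^{j−1} + k·R, where R := (N−1) − ∑_{j=1}^{k−1} r(r−1)^{j−1}. (The paper applies this with k the largest integer for which R ≥ 0, but the inequality holds for every k ≥ 1.) -/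
/-!
Every vertex at distance `j + 1` from `u` has a neighbour at distance `j`, so at most `r - 1` of
its neighbours lie at distance `j + 2`. Hence the sphere of radius `j + 1` has at most
`r (r - 1)^j` vertices and the ball `B_i` of radius `i` at most `1 + ∑_{j=1}^{i} r (r - 1)^{j-1}`.
Summing `#{v | i < dist u v} = N - |B_i|` over `i < k` gives `∑_v min(k, dist u v)`, a lower
bound for the distance sum, and by Abel summation the resulting bound is the claimed expression.
-/

open Finset

theorem Finset.sum_range_card_filter_lt_le_sum {α : Type*} (s : Finset α) (f : α → ℕ)
    (k : ℕ) :
    ∑ i ∈ range k, #{x ∈ s | i < f x} ≤ ∑ x ∈ s, f x :=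
  calc ∑ i ∈ range k, #{x ∈ s | i < f x}
      = ∑ x ∈ s, #{i ∈ range k | i < f x} := by
        simp only [card_filter]
        exact sum_comm
    _ ≤ ∑ x ∈ s, f x := sum_le_sum fun x _ =>
        (card_le_card fun i hi => mem_range.2 (mem_filter.1 hi).2).trans_eq (card_range _)

theorem Finset.sum_Icc_mul_add_mul_sub_sum_eq {R : Type*} [CommRing R] (s : ℕ → R) (c : R)
    (k : ℕ) :
    ∑ j ∈ Icc 1 (k - 1), (j : R) * s j + k * (c - ∑ j ∈ Icc 1 (k - 1), s j)
      = ∑ i ∈ range k, (c - ∑ j ∈ Icc 1 i, s j) := by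
  rcases k with _ | k
  · simp
  rw [Nat.add_sub_cancel]
  induction k with
  | zero => simp
  | succ k ih =>
    rw [sum_range_succ, ← ih, sum_Icc_succ_top (by omega), sum_Icc_succ_top (by omega)]
    push_cast
    ring

theorem Nat.cast_mul_pow_sub_one {R : Type*} [Ring R] (r m : ℕ) :
    ((r * (r - 1) ^ m : ℕ) : R) = r * (r - 1) ^ m := by
  rcases r with _ | r <;> simp

namespace SimpleGraph

variable {V : Type*} {G : SimpleGraph V}

theorem Connected.exists_adj_dist_eq_of_dist_eq_add_one (hconn : G.Connected) {u v : V}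
    {j : ℕ} (h : G.dist u v = j + 1) : ∃ w, G.Adj w v ∧ G.dist u w = j := by
  obtain ⟨p, hp⟩ := hconn.exists_walk_length_eq_dist v u
  have hlen : p.length = j + 1 := by rw [hp, dist_comm, h]
  cases p with
  | nil => simp at hlen
  | @cons _ w _ hadj q =>
    have hle : G.dist u w ≤ j := by
      rw [dist_comm]
      exact (dist_le q).trans (by simp only [Walk.length_cons] at hlen; omega)
    have := hadj.diff_dist_adj (u := u)
    exact ⟨w, hadj.symm, by omega⟩

variable [Fintype V] [DecidableRel G.Adj]

theorem Connected.card_filter_dist_eq_add_two_le (hconn : G.Connected) {u w : V} {j : ℕ}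
    (hw : G.dist u w = j + 1) :
    #{x ∈ G.neighborFinset w | G.dist u x = j + 2} ≤ G.degree w - 1 := by
  obtain ⟨w', hadj, hw'⟩ := hconn.exists_adj_dist_eq_of_dist_eq_add_one hw
  have hlt : #{x ∈ G.neighborFinset w | G.dist u x = j + 2} < #(G.neighborFinset w) :=
    card_lt_card <| (ssubset_iff_of_subset (filter_subset _ _)).2
      ⟨w', (mem_neighborFinset _ _ _).2 hadj.symm, fun h => by
        rw [(mem_filter.1 h).2] at hw'; omega⟩
  rw [card_neighborFinset_eq_degree] at hlt
  omega

variable [DecidableEq V]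

theorem Connected.card_filter_dist_eq_add_one_le (hconn : G.Connected) {r : ℕ}
    (hdeg : ∀ v, G.degree v ≤ r) (u : V) (j : ℕ) :
    #{v | G.dist u v = j + 1} ≤ r * (r - 1) ^ j := by
  induction j with
  | zero =>
    calc #{v | G.dist u v = 0 + 1} ≤ #(G.neighborFinset u) :=
          card_le_card fun v hv => by simpa using hv
      _ ≤ r * (r - 1) ^ 0 := by simpa using hdeg u
  | succ j ih =>
    have hsub : ({v | G.dist u v = j + 1 + 1} : Finset V) ⊆
        ({w | G.dist u w = j + 1} : Finset V).biUnion
          fun w => {x ∈ G.neighborFinset w | G.dist u x = j + 2} := by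
      intro v hv
      obtain ⟨w, hadj, hw⟩ :=
        hconn.exists_adj_dist_eq_of_dist_eq_add_one (mem_filter.1 hv).2
      simp only [mem_biUnion, mem_filter, mem_univ, true_and, mem_neighborFinset]
      exact ⟨w, hw, hadj, (mem_filter.1 hv).2⟩
    calc #{v | G.dist u v = j + 1 + 1}
        ≤ ∑ w ∈ {w | G.dist u w = j + 1}, #{x ∈ G.neighborFinset w | G.dist u x = j + 2} :=
          (card_le_card hsub).trans card_biUnion_le
      _ ≤ #{w | G.dist u w = j + 1} * (r - 1) := by
          refine sum_le_card_nsmul _ _ _ fun w hw => ?_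
          exact (hconn.card_filter_dist_eq_add_two_le (mem_filter.1 hw).2).trans
            (Nat.sub_le_sub_right (hdeg w) 1)
      _ ≤ r * (r - 1) ^ j * (r - 1) := Nat.mul_le_mul_right _ ih
      _ = r * (r - 1) ^ (j + 1) := by ring

theorem Connected.card_filter_dist_le_le (hconn : G.Connected) {r : ℕ}
    (hdeg : ∀ v, G.degree v ≤ r) (u : V) (i : ℕ) :
    #{v | G.dist u v ≤ i} ≤ 1 + ∑ j ∈ Icc 1 i, r * (r - 1) ^ (j - 1) := by
  induction i with
  | zero =>
    calc #{v | G.dist u v ≤ 0} ≤ #{u} := card_le_card fun v hv => mem_singleton.2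
          (hconn.dist_eq_zero_iff.1 (Nat.le_zero.1 (mem_filter.1 hv).2)).symm
      _ = 1 + ∑ j ∈ Icc 1 0, r * (r - 1) ^ (j - 1) := by simp
  | succ i ih =>
    have hsplit : ({v | G.dist u v ≤ i + 1} : Finset V) =
        ({v | G.dist u v ≤ i} : Finset V) ∪ ({v | G.dist u v = i + 1} : Finset V) := by
      ext v
      simp only [mem_filter, mem_univ, true_and, mem_union]
      omega
    rw [hsplit, sum_Icc_succ_top (by omega), Nat.add_sub_cancel, ← add_assoc]
    exact card_union_le _ _ |>.trans <|
      add_le_add ih (hconn.card_filter_dist_eq_add_one_le hdeg u i)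

end SimpleGraph

theorem stmt_4_general {V : Type*} [Fintype V] (G : SimpleGraph V)
    [DecidableRel G.Adj] (N r : ℕ) (hN : Fintype.card V = N)
    (hconn : G.Connected) (hdeg : ∀ v, G.degree v ≤ r)
    (u : V) (k : ℕ) :
    (∑ j ∈ Finset.Icc 1 (k - 1), (j : ℝ) * (r : ℝ) * ((r : ℝ) - 1) ^ (j - 1))
        + (k : ℝ) * (((N : ℝ) - 1)
            - ∑ j ∈ Finset.Icc 1 (k - 1), (r : ℝ) * ((r : ℝ) - 1) ^ (j - 1))
      ≤ ∑ v, (G.dist u v : ℝ) := by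
  classical
  have hfar (i : ℕ) : (N : ℝ) - 1 - ∑ j ∈ Icc 1 i, (r : ℝ) * ((r : ℝ) - 1) ^ (j - 1)
      ≤ #{v | i < G.dist u v} := by
    have hcompl := card_filter_add_card_filter_not (s := univ) (fun v => i < G.dist u v)
    simp only [not_lt, card_univ, hN] at hcompl
    have hball : (#{v | G.dist u v ≤ i} : ℝ)
        ≤ 1 + ∑ j ∈ Icc 1 i, (r : ℝ) * ((r : ℝ) - 1) ^ (j - 1) := by
      simpa only [Nat.cast_add, Nat.cast_one, Nat.cast_sum, Nat.cast_mul_pow_sub_one] using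
        (Nat.cast_le (α := ℝ)).2 (hconn.card_filter_dist_le_le hdeg u i)
    have : (#{v | i < G.dist u v} : ℝ) + #{v | G.dist u v ≤ i} = N := by exact_mod_cast hcompl
    linarith
  calc _ = ∑ i ∈ range k,
          ((N : ℝ) - 1 - ∑ j ∈ Icc 1 i, (r : ℝ) * ((r : ℝ) - 1) ^ (j - 1)) := by
        simp only [mul_assoc]
        exact sum_Icc_mul_add_mul_sub_sum_eq _ _ k
    _ ≤ ∑ i ∈ range k, (#{v | i < G.dist u v} : ℝ) := sum_le_sum fun i _ => hfar i
    _ ≤ ∑ v, (G.dist u v : ℝ) := by exact_mod_cast sum_range_card_filter_lt_le_sum univ _ k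

/-- Lower bound on the sum of distances from a fixed vertex `u` in a connected
graph on `N` vertices with maximum degree at most `r`: for every `k ≥ 1`,
`∑_v dist(u,v) ≥ ∑_{j=1}^{k−1} j·r·(r−1)^{j−1} + k·R` where
`R = (N−1) − ∑_{j=1}^{k−1} r·(r−1)^{j−1}`. -/
theorem stmt_4 {V : Type*} [Fintype V] [DecidableEq V] (G : SimpleGraph V)
    [DecidableRel G.Adj] (N r : ℕ) (hN : Fintype.card V = N)
    (hconn : G.Connected) (hdeg : ∀ v, G.degree v ≤ r) (hr : 2 ≤ r)
    (u : V) (k : ℕ) (hk : 1 ≤ k) :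
    (∑ j ∈ Finset.Icc 1 (k - 1), (j : ℝ) * (r : ℝ) * ((r : ℝ) - 1) ^ (j - 1))
        + (k : ℝ) * (((N : ℝ) - 1)
            - ∑ j ∈ Finset.Icc 1 (k - 1), (r : ℝ) * ((r : ℝ) - 1) ^ (j - 1))
      ≤ ∑ v, (G.dist u v : ℝ) :=
  stmt_4_general G N r hN hconn hdeg u k
end

section
/- (Equation (1) of the paper: two-cluster upper bound on throughput.) Let G be a finite simple graph with capacities c : V × V → ℝ satisfying c(u,v) ≥ 0 and c(u,v) = 0 when u and v are not adjacent, and let V be partitioned into two clusters V₁, V₂. Let C := ∑_{(u,v)} c(u,v) be the total capacity and C̄ := Cap(V₁) the cross-cluster capacity. Let (s_i, t_i)_{i∈I} be commodities with s_i ≠ t_i and |I| = n₁ + n₂ for positive integers n₁, n₂, such that (i) the number of commodities with exactly one endpoint in V₁ equals 2n₁n₂/(n₁+n₂) (assumed to be a positive integer), and (ii) ∑_{i∈I} dist(s_i, t_i) = ⟨D⟩ · (n₁ + n₂) for some real ⟨D⟩ > 0. If (g_i) is a concurrent multicommodity flow respecting c with every commodity's value at least T ≥ 0, then T ≤ min{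 C / (⟨D⟩ (n₁+n₂)), C̄ (n₁+n₂) / (2 n₁ n₂) }. -/
/-!
Pair a flow with a vertex potential `F`: conservation makes `∑ g u v (F v - F u)` telescope to
`x (F t - F s)`, so if `F` rises by at most `w u v` along each edge, `x (F t - F s)` is at most
the `w`-weighted load of the flow. With `F = dist(s, ·)` and `w = 1`, a flow of value `x` uses at
least `x · dist(s, t)` units of capacity; with `F` the indicator of the complement of a cut,
every commodity crossing the cut pushes at least its value across it. Summing over all
commodities, resp. over the crossing ones, bounds `T` by the total, resp. the cut, capacity.
-/

open Finset

namespace IsFlow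

variable {V : Type*} [Fintype V] [DecidableEq V] {G : SimpleGraph V} {s t : V} {x : ℝ}
  {g : V → V → ℝ}

lemma sum_mul_potential_sub (hst : s ≠ t) (hg : IsFlow G s t x g) (F : V → ℝ) :
    ∑ u, ∑ v, g u v * (F v - F u) = x * (F t - F s) := by
  obtain ⟨-, -, hcons, hval⟩ := hg
  set net : V → ℝ := fun w => (∑ u, g u w) - ∑ v, g w v
  have hnet : ∀ w ∉ ({s, t} : Finset V), net w = 0 := fun w hw => by
    simp only [mem_insert, mem_singleton, not_or] at hw
    simp [net, hcons w hw.1 hw.2]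
  have hsum_net : ∑ w, net w = 0 := by
    simp only [net, sum_sub_distrib]
    rw [sum_comm, sub_self]
  have hpair : ∀ φ : V → ℝ, ∑ w, φ w * net w = φ s * net s + φ t * net t := fun φ => by
    rw [← sum_pair (f := fun w => φ w * net w) hst]
    exact (sum_subset (subset_univ _) fun w _ hw => by simp [hnet w hw]).symm
  have hnet_s : net s = -x := by simp only [net]; linarith
  have hnet_t : net t = x := by
    have := hpair 1
    simp only [Pi.one_apply, one_mul] at this
    linarith
  calc ∑ u, ∑ v, g u v * (F v - F u) = ∑ w, F w * net w := by
        simp only [net, mul_sub, sum_sub_distrib, mul_sum]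
        rw [sum_comm (f := fun u v => g u v * F v)]
        simp only [mul_comm]
    _ = x * (F t - F s) := by rw [hpair, hnet_s, hnet_t]; ring

lemma mul_potential_sub_le (hst : s ≠ t) (hg : IsFlow G s t x g) {F : V → ℝ}
    {w : V → V → ℝ} (hF : ∀ u v, G.Adj u v → F v - F u ≤ w u v) :
    x * (F t - F s) ≤ ∑ u, ∑ v, g u v * w u v := by
  rw [← hg.sum_mul_potential_sub hst F]
  refine sum_le_sum fun u _ => sum_le_sum fun v _ => ?_
  by_cases huv : G.Adj u v
  · exact mul_le_mul_of_nonneg_left (hF u v huv) (hg.1 u v)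
  · simp [hg.2.1 u v huv]

lemma mul_dist_le_sum (hst : s ≠ t) (hg : IsFlow G s t x g) :
    x * G.dist s t ≤ ∑ u, ∑ v, g u v := by
  have hlip : ∀ u v, G.Adj u v → (G.dist s v : ℝ) - G.dist s u ≤ 1 := fun u v huv => by
    have := huv.reachable.dist_triangle_right s
    rw [SimpleGraph.dist_eq_one_iff_adj.mpr huv] at this
    linarith [(by exact_mod_cast this : (G.dist s v : ℝ) ≤ G.dist s u + 1)]
  simpa using hg.mul_potential_sub_le hst hlip

lemma le_sum_cut (hst : s ≠ t) (hg : IsFlow G s t x g) {S : Finset V} (hs : s ∈ S)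
    (ht : t ∉ S) : x ≤ ∑ u ∈ S, ∑ v ∈ Sᶜ, g u v := by
  let F : V → ℝ := fun w => if w ∈ S then 0 else 1
  have hF : ∀ u v, G.Adj u v → F v - F u ≤ if u ∈ S ∧ v ∈ Sᶜ then 1 else 0 := by
    intro u v _
    by_cases hu : u ∈ S <;> by_cases hv : v ∈ S <;> simp [F, hu, hv]
  calc x = x * (F t - F s) := by simp [F, hs, ht]
    _ ≤ ∑ u, ∑ v, g u v * if u ∈ S ∧ v ∈ Sᶜ then 1 else 0 := hg.mul_potential_sub_le hst hF
    _ = ∑ u ∈ S, ∑ v ∈ Sᶜ, g u v := by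
        simp only [mul_ite, mul_one, mul_zero, ite_and, sum_ite_irrel, sum_const_zero,
          Fintype.sum_ite_mem]

lemma le_sum_cut_symm (hst : s ≠ t) (hg : IsFlow G s t x g) {S : Finset V}
    (hcross : (s ∈ S ∧ t ∉ S) ∨ (t ∈ S ∧ s ∉ S)) :
    x ≤ ∑ u ∈ S, ∑ v ∈ Sᶜ, (g u v + g v u) := by
  rcases hcross with ⟨hs, ht⟩ | ⟨ht, hs⟩
  · calc x ≤ ∑ u ∈ S, ∑ v ∈ Sᶜ, g u v := hg.le_sum_cut hst hs ht
      _ ≤ _ := by gcongr with u _ v; linarith [hg.1 v u]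
  · calc x ≤ ∑ u ∈ Sᶜ, ∑ v ∈ Sᶜᶜ, g u v := hg.le_sum_cut hst (mem_compl.2 hs) (by simpa)
      _ = ∑ u ∈ S, ∑ v ∈ Sᶜ, g v u := by rw [compl_compl, sum_comm]
      _ ≤ _ := by gcongr with u _ v; linarith [hg.1 u v]

end IsFlow

section Concurrent

variable {V I : Type*} [Fintype V] [DecidableEq V] [Fintype I] {G : SimpleGraph V}
  {c : V → V → ℝ} {s t : I → V} {x : I → ℝ} {g : I → V → V → ℝ} {T : ℝ}

lemma mul_sum_dist_le_sum_capacity (hst : ∀ i, s i ≠ t i)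
    (hflow : ∀ i, IsFlow G (s i) (t i) (x i) (g i)) (hcap : ∀ u v, ∑ i, g i u v ≤ c u v)
    (hTx : ∀ i, T ≤ x i) :
    T * ∑ i, (G.dist (s i) (t i) : ℝ) ≤ ∑ u, ∑ v, c u v :=
  calc T * ∑ i, (G.dist (s i) (t i) : ℝ) ≤ ∑ i, x i * G.dist (s i) (t i) := by
        rw [mul_sum]; gcongr with i; exact hTx i
    _ ≤ ∑ i, ∑ u, ∑ v, g i u v := sum_le_sum fun i _ => (hflow i).mul_dist_le_sum (hst i)
    _ = ∑ u, ∑ v, ∑ i, g i u v := by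
        rw [sum_comm]; exact sum_congr rfl fun _ _ => sum_comm
    _ ≤ ∑ u, ∑ v, c u v := by gcongr with u _ v; exact hcap u v

lemma mul_card_crossing_le_cut_capacity (hst : ∀ i, s i ≠ t i)
    (hflow : ∀ i, IsFlow G (s i) (t i) (x i) (g i)) (hcap : ∀ u v, ∑ i, g i u v ≤ c u v)
    (hTx : ∀ i, T ≤ x i) (S : Finset V) :
    T * #{i | (s i ∈ S ∧ t i ∉ S) ∨ (t i ∈ S ∧ s i ∉ S)}
      ≤ ∑ u ∈ S, ∑ v ∈ Sᶜ, (c u v + c v u) := by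
  set K := ({i | (s i ∈ S ∧ t i ∉ S) ∨ (t i ∈ S ∧ s i ∉ S)} : Finset I)
  have hK : ∀ u v, ∑ i ∈ K, g i u v ≤ c u v := fun u v =>
    (sum_le_sum_of_subset_of_nonneg (subset_univ K) fun i _ _ => (hflow i).1 u v).trans
      (hcap u v)
  calc T * #K = ∑ _i ∈ K, T := by rw [sum_const, nsmul_eq_mul, mul_comm]
    _ ≤ ∑ i ∈ K, x i := sum_le_sum fun i _ => hTx i
    _ ≤ ∑ i ∈ K, ∑ u ∈ S, ∑ v ∈ Sᶜ, (g i u v + g i v u) :=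
        sum_le_sum fun i hi => (hflow i).le_sum_cut_symm (hst i) (mem_filter.1 hi).2
    _ = ∑ u ∈ S, ∑ v ∈ Sᶜ, ((∑ i ∈ K, g i u v) + ∑ i ∈ K, g i v u) := by
        simp only [← sum_add_distrib]
        rw [sum_comm]; exact sum_congr rfl fun _ _ => sum_comm
    _ ≤ ∑ u ∈ S, ∑ v ∈ Sᶜ, (c u v + c v u) := by
        gcongr with u _ v <;> apply hK

end Concurrent

theorem stmt_9_general {V I : Type*} [Fintype V] [DecidableEq V] [Fintype I]
    (G : SimpleGraph V) (c : V → V → ℝ)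
    (V₁ : Finset V)
    (n₁ n₂ : ℕ) (hn₁ : 0 < n₁) (hn₂ : 0 < n₂)
    (s t : I → V) (hst : ∀ i, s i ≠ t i)
    (hcross : (univ.filter
        (fun i => (s i ∈ V₁ ∧ t i ∉ V₁) ∨ (t i ∈ V₁ ∧ s i ∉ V₁))).card
          * (n₁ + n₂) = 2 * n₁ * n₂)
    (Davg : ℝ) (hDavg : 0 < Davg)
    (hsum : (∑ i, (G.dist (s i) (t i) : ℝ)) = Davg * ((n₁ : ℝ) + (n₂ : ℝ)))
    (x : I → ℝ) (g : I → V → V → ℝ)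
    (hflow : ∀ i, IsFlow G (s i) (t i) (x i) (g i))
    (hcap : ∀ u v, (∑ i, g i u v) ≤ c u v)
    (T : ℝ) (hTx : ∀ i, T ≤ x i) :
    T ≤ min ((∑ u, ∑ v, c u v) / (Davg * ((n₁ : ℝ) + (n₂ : ℝ))))
        ((∑ u ∈ V₁, ∑ v ∈ V₁ᶜ, (c u v + c v u)) * ((n₁ : ℝ) + (n₂ : ℝ))
          / (2 * (n₁ : ℝ) * (n₂ : ℝ))) := by
  refine le_min ?_ ?_
  · rw [le_div_iff₀ (by positivity), ← hsum]
    exact mul_sum_dist_le_sum_capacity hst hflow hcap hTx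
  · have hcrossR := congrArg (Nat.cast : ℕ → ℝ) hcross
    push_cast at hcrossR
    rw [le_div_iff₀ (by positivity), ← hcrossR, ← mul_assoc]
    gcongr
    exact mul_card_crossing_le_cut_capacity hst hflow hcap hTx V₁

/-- Equation (1) of the paper: two-cluster upper bound on throughput.
With total capacity `C`, cross-cluster capacity `C̄ = Cap(V₁)`,
`n₁ + n₂` commodities of which exactly `2n₁n₂/(n₁+n₂)` cross the cluster
boundary, and average endpoint distance `⟨D⟩ > 0`, any concurrent
multicommodity flow respecting the capacities with every commodity value at
least `T ≥ 0` satisfies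
`T ≤ min { C/(⟨D⟩(n₁+n₂)), C̄(n₁+n₂)/(2n₁n₂) }`. -/
theorem stmt_9 {V I : Type*} [Fintype V] [DecidableEq V] [Fintype I]
    [DecidableEq I] (G : SimpleGraph V) (c : V → V → ℝ)
    (hc0 : ∀ u v, 0 ≤ c u v) (hcadj : ∀ u v, ¬ G.Adj u v → c u v = 0)
    (V₁ V₂ : Finset V) (hdisj : Disjoint V₁ V₂) (hunion : V₁ ∪ V₂ = univ)
    (n₁ n₂ : ℕ) (hn₁ : 0 < n₁) (hn₂ : 0 < n₂)
    (s t : I → V) (hst : ∀ i, s i ≠ t i)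
    (hcardI : Fintype.card I = n₁ + n₂)
    (hcross : (univ.filter
        (fun i => (s i ∈ V₁ ∧ t i ∉ V₁) ∨ (t i ∈ V₁ ∧ s i ∉ V₁))).card
          * (n₁ + n₂) = 2 * n₁ * n₂)
    (Davg : ℝ) (hDavg : 0 < Davg)
    (hsum : (∑ i, (G.dist (s i) (t i) : ℝ)) = Davg * ((n₁ : ℝ) + (n₂ : ℝ)))
    (x : I → ℝ) (g : I → V → V → ℝ)
    (hflow : ∀ i, IsFlow G (s i) (t i) (x i) (g i))
    (hcap : ∀ u v, (∑ i, g i u v) ≤ c u v)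
    (T : ℝ) (hT : 0 ≤ T) (hTx : ∀ i, T ≤ x i) :
    T ≤ min ((∑ u, ∑ v, c u v) / (Davg * ((n₁ : ℝ) + (n₂ : ℝ))))
        ((∑ u ∈ V₁, ∑ v ∈ V₁ᶜ, (c u v + c v u)) * ((n₁ : ℝ) + (n₂ : ℝ))
          / (2 * (n₁ : ℝ) * (n₂ : ℝ))) :=
  stmt_9_general G c V₁ n₁ n₂ hn₁ hn₂ s t hst hcross Davg hDavg hsum x g hflow hcap T hTx
end

section
/- (Arithmetic core of Lemma 2, corrected form.) Let n, p, q, k, x be real numbers with n > 0, p ≥ 0, q ≥ 0, 0 < k ≤ n/2, and 0 ≤ x ≤ k²/4, and set d := (p+q)·n. Then k·n/2 − 2x ≥ k(n−k)/2 > 0, and k·d − 2p·k² + 4x·(p − q) ≥ 2q · (k·n/2 − 2x). Consequently the ratio (k·d − 2p·k² + 4x(p−q)) / (k·n/2 − 2x) is at least 2q; in particular, when p ≥ q its minimum over x ∈ [0, k²/4] is attained at x = 0 with value (2d − 4kp)/n ≥ 2q. -/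
/-!
Writing `D(x) = k·n/2 − 2x` for the separated demand and `M(x)` for the mixing bound, one has
the identity `M(x) = 2q·D(x) + p·(k(n − 2k) + 4x)`, whose second summand is nonnegative once
`2k ≤ n`; this gives the bound `2q` on the ratio `M/D`. Moreover `M(y)D(x) − M(x)D(y)` equals
`4kp(n − k)(y − x)`, so `M/D` is nondecreasing in `x` and its minimum over `x ≥ 0` is at `x = 0`.
-/

/-- The number of demand pairs separated by a cut set of `k = k₁ + k₂` vertices, `x = k₁k₂`. -/
noncomputable def separatedDemand (n k x : ℝ) : ℝ := k * n / 2 - 2 * x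

/-- The expander-mixing lower bound on the edges cut by that set, with `d = (p + q)·n`. -/
def mixingCutBound (n p q k x : ℝ) : ℝ := k * ((p + q) * n) - 2 * p * k ^ 2 + 4 * x * (p - q)

section

variable {n p q k x : ℝ}

theorem separatedDemand_zero : separatedDemand n k 0 = k * n / 2 := by
  simp [separatedDemand]

theorem mixingCutBound_zero : mixingCutBound n p q k 0 = k * ((p + q) * n) - 2 * p * k ^ 2 := by
  simp [mixingCutBound]

theorem mul_sub_div_two_le_separatedDemand (hx : x ≤ k ^ 2 / 4) :
    k * (n - k) / 2 ≤ separatedDemand n k x := by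
  unfold separatedDemand
  linarith

theorem mixingCutBound_eq :
    mixingCutBound n p q k x = 2 * q * separatedDemand n k x + p * (k * (n - 2 * k) + 4 * x) := by
  unfold mixingCutBound separatedDemand
  ring

theorem two_mul_separatedDemand_le_mixingCutBound (hp : 0 ≤ p) (hk : 0 ≤ k) (hkn : 2 * k ≤ n)
    (hx : 0 ≤ x) : 2 * q * separatedDemand n k x ≤ mixingCutBound n p q k x := by
  rw [mixingCutBound_eq, le_add_iff_nonneg_right]
  have : 0 ≤ k * (n - 2 * k) := mul_nonneg hk (by linarith)
  positivity

theorem two_mul_le_mixingCutBound_div (hp : 0 ≤ p) (hk : 0 ≤ k) (hkn : 2 * k ≤ n) (hx : 0 ≤ x)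
    (hD : 0 < separatedDemand n k x) :
    2 * q ≤ mixingCutBound n p q k x / separatedDemand n k x :=
  (le_div_iff₀ hD).2 (two_mul_separatedDemand_le_mixingCutBound hp hk hkn hx)

theorem mixingCutBound_mul_separatedDemand_sub (y : ℝ) :
    mixingCutBound n p q k y * separatedDemand n k x
      - mixingCutBound n p q k x * separatedDemand n k y = 4 * k * p * (n - k) * (y - x) := by
  unfold mixingCutBound separatedDemand
  ring

theorem monotoneOn_mixingCutBound_div (hp : 0 ≤ p) (hk : 0 ≤ k) (hkn : k ≤ n) :
    MonotoneOn (fun x => mixingCutBound n p q k x / separatedDemand n k x)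
      {x | 0 < separatedDemand n k x} := by
  intro x hx y hy hxy
  rw [div_le_div_iff₀ hx hy, ← sub_nonneg, mixingCutBound_mul_separatedDemand_sub]
  have : 0 ≤ n - k := by linarith
  have : 0 ≤ y - x := by linarith
  positivity

theorem mixingCutBound_div_separatedDemand_zero (hk : k ≠ 0) (hn : n ≠ 0) :
    mixingCutBound n p q k 0 / separatedDemand n k 0 = (2 * ((p + q) * n) - 4 * k * p) / n := by
  rw [mixingCutBound_zero, separatedDemand_zero]
  field_simp
  ring

end

theorem stmt_11_general (n p q k x : ℝ) (hp : 0 ≤ p)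
    (hk0 : 0 < k) (hk : k ≤ n / 2) (hx0 : 0 ≤ x) (hx : x ≤ k ^ 2 / 4) :
    (k * (n - k) / 2 ≤ k * n / 2 - 2 * x) ∧
    (0 < k * (n - k) / 2) ∧
    (2 * q * (k * n / 2 - 2 * x)
        ≤ k * ((p + q) * n) - 2 * p * k ^ 2 + 4 * x * (p - q)) ∧
    (2 * q ≤ (k * ((p + q) * n) - 2 * p * k ^ 2 + 4 * x * (p - q))
        / (k * n / 2 - 2 * x)) ∧
    (q ≤ p →
      ((k * ((p + q) * n) - 2 * p * k ^ 2) / (k * n / 2)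
          ≤ (k * ((p + q) * n) - 2 * p * k ^ 2 + 4 * x * (p - q))
            / (k * n / 2 - 2 * x)) ∧
      ((k * ((p + q) * n) - 2 * p * k ^ 2) / (k * n / 2)
          = (2 * ((p + q) * n) - 4 * k * p) / n) ∧
      (2 * q ≤ (2 * ((p + q) * n) - 4 * k * p) / n)) := by
  have hkn : 2 * k ≤ n := by linarith
  have hn : 0 < n := by linarith
  have hlow : k * (n - k) / 2 ≤ separatedDemand n k x := mul_sub_div_two_le_separatedDemand hx
  have hpos : 0 < k * (n - k) / 2 := by
    have : 0 < n - k := by linarith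
    positivity
  have hD : 0 < separatedDemand n k x := hpos.trans_le hlow
  have hD0 : 0 < separatedDemand n k 0 := by
    rw [separatedDemand_zero]
    positivity
  have hmono : mixingCutBound n p q k 0 / separatedDemand n k 0
      ≤ mixingCutBound n p q k x / separatedDemand n k x :=
    monotoneOn_mixingCutBound_div hp hk0.le (by linarith) hD0 hD hx0
  have hratio0 : 2 * q ≤ mixingCutBound n p q k 0 / separatedDemand n k 0 :=
    two_mul_le_mixingCutBound_div hp hk0.le hkn le_rfl hD0
  have hzero := mixingCutBound_div_separatedDemand_zero (p := p) (q := q) hk0.ne' hn.ne'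
  rw [hzero] at hratio0
  rw [mixingCutBound_zero, separatedDemand_zero] at hmono hzero
  exact ⟨hlow, hpos, two_mul_separatedDemand_le_mixingCutBound hp hk0.le hkn hx0,
    two_mul_le_mixingCutBound_div hp hk0.le hkn hx0 hD,
    fun _ => ⟨hmono, hzero, hratio0⟩⟩

/-- Arithmetic core of Lemma 2 of the paper (corrected form). With
`d = (p+q)·n`, for `0 < k ≤ n/2` and `0 ≤ x ≤ k²/4`:
the demand term satisfies `k·n/2 − 2x ≥ k(n−k)/2 > 0`; the mixing lower bound
dominates `2q` times the demand term; hence the ratio is at least `2q`; and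
when `p ≥ q` the ratio is minimized at `x = 0`, where its value is
`(2d − 4kp)/n ≥ 2q`. -/
theorem stmt_11 (n p q k x : ℝ) (hn : 0 < n) (hp : 0 ≤ p) (hq : 0 ≤ q)
    (hk0 : 0 < k) (hk : k ≤ n / 2) (hx0 : 0 ≤ x) (hx : x ≤ k ^ 2 / 4) :
    (k * (n - k) / 2 ≤ k * n / 2 - 2 * x) ∧
    (0 < k * (n - k) / 2) ∧
    (2 * q * (k * n / 2 - 2 * x)
        ≤ k * ((p + q) * n) - 2 * p * k ^ 2 + 4 * x * (p - q)) ∧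
    (2 * q ≤ (k * ((p + q) * n) - 2 * p * k ^ 2 + 4 * x * (p - q))
        / (k * n / 2 - 2 * x)) ∧
    (q ≤ p →
      ((k * ((p + q) * n) - 2 * p * k ^ 2) / (k * n / 2)
          ≤ (k * ((p + q) * n) - 2 * p * k ^ 2 + 4 * x * (p - q))
            / (k * n / 2 - 2 * x)) ∧
      ((k * ((p + q) * n) - 2 * p * k ^ 2) / (k * n / 2)
          = (2 * ((p + q) * n) - 4 * k * p) / n) ∧
      (2 * q ≤ (2 * ((p + q) * n) - 4 * k * p) / n)) :=
  stmt_11_general n p q k x hp hk0 hk hx0 hx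
end

section
/- (Deterministic form of Lemma 2: the non-uniform sparsest cut for complete bipartite demands is Θ(q).) Let G be a simple graph on V = V₁ ⊔ V₂ with |V₁| = |V₂| = m and n := 2m, let p, q ≥ 0 and c > 0 be reals, and write e(X,Y) for the number of edges of G with one endpoint in X and the other in Y. Assume the expansion bounds: (i) for every A ⊆ V₁, e(A, V₁∖A) ≥ c·p·n·|A|·(1 − 2|A|/n); (ii) for every B ⊆ V₂, e(B, V₂∖B) ≥ c·p·n·|B|·(1 − 2|B|/n); (iii) for every A ⊆ V₁ and B ⊆ V₂, e(A, V₂∖B) + e(B, V₁∖A) ≥ c·q·n·( |A|(1 − 2|B|/n) + |B|(1 − 2|A|/n) ). Then for every S ⊆ V with Dem(S) := #{(u,v)皆∈ V₁×V₂ : exactly one of u,v ∈ S} > 0, the number of edges of G between S and V∖S is at least 2·c·q·Dem(S). Moreover, if additionally every vertex of V₁ has exactly q·n neighbors in V₂, then e(V₁, V₂) = q·n·m and Dem(V₁) = m², so the cut S = V₁ achieves ratio e(V₁,V₂)/Dem(V₁) = 2q; hence the minimum over cuts of e(S, V∖S)/Dem(S) lies between 2cq and 2q. -/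
open Finset

/-- The number of edges of `G` with first endpoint in `X` and second endpoint
in `Y` (counted as ordered pairs; for disjoint `X`, `Y` this is the number of
edges of `G` between `X` and `Y`). -/
def crossEdges {V : Type*} [DecidableEq V] (G : SimpleGraph V)
    [DecidableRel G.Adj] (X Y : Finset V) : ℕ :=
  ((X ×ˢ Y).filter (fun p => G.Adj p.1 p.2)).card

/-- The number of complete-bipartite demand pairs `(u,v) ∈ V₁ × V₂` separated
by the cut `S` (exactly one endpoint in `S`). -/
def demSep {V : Type*} [DecidableEq V] (V₁ V₂ S : Finset V) : ℕ :=
  ((V₁ ×ˢ V₂).filter (fun p => (p.1 ∈ S ∧ p.2 ∉ S) ∨ (p.2 ∈ S ∧ p.1 ∉ S))).card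

/-
The demand separated by `S` splits as `|A|·|V₂∖B| + |V₁∖A|·|B|` with `A = V₁ ∩ S`, `B = V₂ ∩ S`,
and since `|V₁| = |V₂| = m = n/2` the right-hand side of the cross-expansion bound (iii) for
this pair `(A, B)` is exactly `2cq` times that demand. The two edge sets on the left of (iii)
are disjoint and both cross the cut `S`, which gives the lower bound. For the upper bound, the
cut `S = V₁` separates all `m²` demand pairs and, by the degree condition, cuts `qn·m` edges.
-/

section

variable {V : Type*} [DecidableEq V]

lemma demSep_eq (V₁ V₂ S : Finset V) :
    demSep V₁ V₂ S = #(V₁ ∩ S) * #(V₂ \ S) + #(V₁ \ S) * #(V₂ ∩ S) := by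
  rw [demSep, ← card_product, ← card_product, ← card_union_of_disjoint]
  · congr 1
    ext p
    simp only [mem_filter, mem_product, mem_union, mem_inter, mem_sdiff]
    tauto
  · rw [disjoint_left]
    rintro p hp hq
    simp only [mem_product, mem_inter, mem_sdiff] at hp hq
    exact hq.1.2 hp.1.2

lemma demSep_self_of_disjoint {V₁ V₂ : Finset V} (hdisj : Disjoint V₁ V₂) :
    demSep V₁ V₂ V₁ = #V₁ * #V₂ := by
  simp [demSep_eq, sdiff_eq_self_of_disjoint hdisj.symm]

section crossEdges

variable (G : SimpleGraph V) [DecidableRel G.Adj]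

lemma crossEdges_eq_sum_card_neighbors (X Y : Finset V) :
    crossEdges G X Y = ∑ v ∈ X, #(Y.filter (G.Adj v)) := by
  simp only [crossEdges, card_filter, sum_product]

lemma crossEdges_add_crossEdges_le_crossEdges_compl [Fintype V] {V₁ V₂ : Finset V}
    (hdisj : Disjoint V₁ V₂) (S : Finset V) :
    crossEdges G (V₁ ∩ S) (V₂ \ S) + crossEdges G (V₂ ∩ S) (V₁ \ S) ≤ crossEdges G S Sᶜ := by
  rw [crossEdges, crossEdges, ← card_union_of_disjoint]
  · apply card_le_card
    intro x hx
    simp only [mem_union, mem_filter, mem_product, mem_inter, mem_sdiff, mem_compl] at hx ⊢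
    tauto
  · rw [disjoint_left]
    rintro x hx hy
    simp only [mem_filter, mem_product, mem_inter] at hx hy
    exact disjoint_left.mp hdisj hx.1.1.1 hy.1.1.1

theorem two_mul_demSep_le_crossEdges_compl [Fintype V] {V₁ V₂ : Finset V}
    (hdisj : Disjoint V₁ V₂) {m : ℕ} (h1 : #V₁ = m) (h2 : #V₂ = m) {κ : ℝ}
    (hexp : ∀ A ⊆ V₁, ∀ B ⊆ V₂,
      κ * (2 * (m : ℝ)) * ((#A : ℝ) * (1 - 2 * (#B : ℝ) / (2 * (m : ℝ)))
          + (#B : ℝ) * (1 - 2 * (#A : ℝ) / (2 * (m : ℝ))))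
        ≤ (crossEdges G A (V₂ \ B) : ℝ) + (crossEdges G B (V₁ \ A) : ℝ))
    (S : Finset V) :
    2 * κ * (demSep V₁ V₂ S : ℝ) ≤ (crossEdges G S Sᶜ : ℝ) := by
  set A := V₁ ∩ S
  set B := V₂ ∩ S
  have hA : A ⊆ V₁ := inter_subset_left
  have hB : B ⊆ V₂ := inter_subset_left
  have hV₁ : V₁ \ S = V₁ \ A := (sdiff_inter_self_left V₁ S).symm
  have hV₂ : V₂ \ S = V₂ \ B := (sdiff_inter_self_left V₂ S).symm
  have hAm : #A ≤ m := h1 ▸ card_le_card hA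
  have hBm : #B ≤ m := h2 ▸ card_le_card hB
  have hdem : (demSep V₁ V₂ S : ℝ) = #A * (m - #B) + (m - #A) * #B := by
    rw [demSep_eq, hV₁, hV₂, card_sdiff_of_subset hA, card_sdiff_of_subset hB, h1, h2,
      Nat.cast_add, Nat.cast_mul, Nat.cast_mul, Nat.cast_sub hAm, Nat.cast_sub hBm]
  have hcut : (crossEdges G A (V₂ \ B) : ℝ) + crossEdges G B (V₁ \ A) ≤ crossEdges G S Sᶜ := by
    have := crossEdges_add_crossEdges_le_crossEdges_compl G hdisj S
    rw [hV₁, hV₂] at this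
    exact_mod_cast this
  refine le_trans (le_of_eq ?_) ((hexp A hA B hB).trans hcut)
  rcases eq_or_ne (m : ℝ) 0 with hm | hm
  · have hm0 : m = 0 := by exact_mod_cast hm
    simp [hdem, hm, show #A = 0 by omega, show #B = 0 by omega]
  · rw [hdem]
    field_simp

end crossEdges

end

theorem stmt_12_general {V : Type*} [Fintype V] [DecidableEq V] (G : SimpleGraph V)
    [DecidableRel G.Adj]
    (V₁ V₂ : Finset V) (hdisj : Disjoint V₁ V₂) (hunion : V₁ ∪ V₂ = univ)
    (m : ℕ) (hm : 0 < m) (h1 : V₁.card = m) (h2 : V₂.card = m)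
    (q c : ℝ)
    (hiii : ∀ A ⊆ V₁, ∀ B ⊆ V₂,
      c * q * (2 * (m : ℝ)) * ((A.card : ℝ) * (1 - 2 * (B.card : ℝ) / (2 * (m : ℝ)))
          + (B.card : ℝ) * (1 - 2 * (A.card : ℝ) / (2 * (m : ℝ))))
        ≤ (crossEdges G A (V₂ \ B) : ℝ) + (crossEdges G B (V₁ \ A) : ℝ)) :
    (∀ S : Finset V, 0 < demSep V₁ V₂ S →
        2 * c * q * (demSep V₁ V₂ S : ℝ) ≤ (crossEdges G S Sᶜ : ℝ)) ∧
    ((∀ v ∈ V₁, ((V₂.filter (fun w => G.Adj v w)).card : ℝ) = q * (2 * (m : ℝ))) →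
      ((crossEdges G V₁ V₂ : ℝ) = q * (2 * (m : ℝ)) * (m : ℝ)) ∧
      (demSep V₁ V₂ V₁ = m ^ 2) ∧
      ((crossEdges G V₁ V₁ᶜ : ℝ) / (demSep V₁ V₂ V₁ : ℝ) = 2 * q) ∧
      (∀ S : Finset V, 0 < demSep V₁ V₂ S →
        2 * c * q ≤ (crossEdges G S Sᶜ : ℝ) / (demSep V₁ V₂ S : ℝ))) := by
  have lower (S : Finset V) : 2 * c * q * (demSep V₁ V₂ S : ℝ) ≤ crossEdges G S Sᶜ := by
    rw [mul_assoc 2]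
    exact two_mul_demSep_le_crossEdges_compl G hdisj h1 h2 hiii S
  refine ⟨fun S _ => lower S, fun hdeg => ?_⟩
  have hcross : (crossEdges G V₁ V₂ : ℝ) = q * (2 * m) * m := by
    rw [crossEdges_eq_sum_card_neighbors, Nat.cast_sum, sum_congr rfl hdeg, sum_const, h1,
      nsmul_eq_mul, mul_comm]
  have hdem : demSep V₁ V₂ V₁ = m ^ 2 := by rw [demSep_self_of_disjoint hdisj, h1, h2, sq]
  have hcompl : V₁ᶜ = V₂ := IsCompl.compl_eq ⟨hdisj, codisjoint_iff.mpr hunion⟩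
  refine ⟨hcross, hdem, ?_, fun S hS => (le_div_iff₀ (by exact_mod_cast hS)).mpr (lower S)⟩
  rw [hcompl, hcross, hdem, Nat.cast_pow]
  field_simp

/-- Deterministic form of Lemma 2 of the paper: under the expander-mixing
expansion hypotheses (i)–(iii), every cut `S` separating a positive number of
complete-bipartite demand pairs cuts at least `2·c·q·Dem(S)` edges of `G`;
moreover, if every vertex of `V₁` has exactly `q·n` neighbors in `V₂`, then
the cut `S = V₁` has `e(V₁,V₂) = q·n·m`, `Dem(V₁) = m²`, and ratio exactly
`2q`, so the non-uniform sparsest cut lies between `2cq` and `2q`. -/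
theorem stmt_12 {V : Type*} [Fintype V] [DecidableEq V] (G : SimpleGraph V)
    [DecidableRel G.Adj]
    (V₁ V₂ : Finset V) (hdisj : Disjoint V₁ V₂) (hunion : V₁ ∪ V₂ = univ)
    (m : ℕ) (hm : 0 < m) (h1 : V₁.card = m) (h2 : V₂.card = m)
    (p q c : ℝ) (hp : 0 ≤ p) (hq : 0 ≤ q) (hc : 0 < c)
    (hi : ∀ A ⊆ V₁,
      c * p * (2 * (m : ℝ)) * (A.card : ℝ) * (1 - 2 * (A.card : ℝ) / (2 * (m : ℝ)))
        ≤ (crossEdges G A (V₁ \ A) : ℝ))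
    (hii : ∀ B ⊆ V₂,
      c * p * (2 * (m : ℝ)) * (B.card : ℝ) * (1 - 2 * (B.card : ℝ) / (2 * (m : ℝ)))
        ≤ (crossEdges G B (V₂ \ B) : ℝ))
    (hiii : ∀ A ⊆ V₁, ∀ B ⊆ V₂,
      c * q * (2 * (m : ℝ)) * ((A.card : ℝ) * (1 - 2 * (B.card : ℝ) / (2 * (m : ℝ)))
          + (B.card : ℝ) * (1 - 2 * (A.card : ℝ) / (2 * (m : ℝ))))
        ≤ (crossEdges G A (V₂ \ B) : ℝ) + (crossEdges G B (V₁ \ A) : ℝ)) :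
    (∀ S : Finset V, 0 < demSep V₁ V₂ S →
        2 * c * q * (demSep V₁ V₂ S : ℝ) ≤ (crossEdges G S Sᶜ : ℝ)) ∧
    ((∀ v ∈ V₁, ((V₂.filter (fun w => G.Adj v w)).card : ℝ) = q * (2 * (m : ℝ))) →
      ((crossEdges G V₁ V₂ : ℝ) = q * (2 * (m : ℝ)) * (m : ℝ)) ∧
      (demSep V₁ V₂ V₁ = m ^ 2) ∧
      ((crossEdges G V₁ V₁ᶜ : ℝ) / (demSep V₁ V₂ V₁ : ℝ) = 2 * q) ∧
      (∀ S : Finset V, 0 < demSep V₁ V₂ S →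
        2 * c * q ≤ (crossEdges G S Sᶜ : ℝ) / (demSep V₁ V₂ S : ℝ))) :=
  stmt_12_general G V₁ V₂ hdisj hunion m hm h1 h2 q c hiii
end
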